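/- In R = ℂ[s,t,u], let a = s²u + st², b = stu + 2t³, c = t²u + s³, and let A = t²u³ − 2s²t²u, B = −stu³ + s³tu, C = st²u². Then: (1) A·a + B·b + C·c = 0; (2) each of A, B, C lies in the saturation of the ideal I = ⟨a,b,c⟩ with respect to ⟨s,t,u⟩, i.e., for each of A, B, C there exists k such that f·A ∈ I (respectively f·B ∈ I, f·C ∈ I) for every f ∈ ⟨s,t,u⟩^k; and (3) the syzygy (A,B,C) is not a Koszul syzygy: there do not exist h₁, h₂, h₃ ∈ R with A = h₁c + h₂b, B = −h₂a + h₃c, and C = −h₁a − h₃b. -/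

import Mathlib

/-!
`A`, `B`, `C` already lie in `I = ⟨a, b, c⟩`, so exponent `0` witnesses their membership in the
saturation. A Koszul syzygy would put `B` in `⟨a, c⟩`, but at the point `s = ε₁`, `t = ε₂`,
`u = 1` of `ℂ[ε₁, ε₂]/(ε₁², ε₂²)` both `a = s(su + t²)` and `c = t²u + s³` vanish, while
`B = stu(s² - u²)` becomes `-ε₁ε₂ ≠ 0`.
-/

open MvPolynomial

/-- In `R = ℂ[s,t,u]` we write `s = X 0`, `t = X 1`, `u = X 2`. -/
noncomputable def exa : MvPolynomial (Fin 3) ℂ := X 0 ^ 2 * X 2 + X 0 * X 1 ^ 2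
/-- `b = stu + 2t³`. -/
noncomputable def exb : MvPolynomial (Fin 3) ℂ := X 0 * X 1 * X 2 + 2 * X 1 ^ 3
/-- `c = t²u + s³`. -/
noncomputable def exc : MvPolynomial (Fin 3) ℂ := X 1 ^ 2 * X 2 + X 0 ^ 3
/-- `A = t²u³ − 2s²t²u`. -/
noncomputable def exA : MvPolynomial (Fin 3) ℂ :=
  X 1 ^ 2 * X 2 ^ 3 - 2 * X 0 ^ 2 * X 1 ^ 2 * X 2
/-- `B = −stu³ + s³tu`. -/
noncomputable def exB : MvPolynomial (Fin 3) ℂ :=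
  -(X 0 * X 1 * X 2 ^ 3) + X 0 ^ 3 * X 1 * X 2
/-- `C = st²u²`. -/
noncomputable def exC : MvPolynomial (Fin 3) ℂ := X 0 * X 1 ^ 2 * X 2 ^ 2

open TrivSqZeroExt

theorem Ideal.exists_forall_pow_mul_mem_of_mem {R : Type*} [CommSemiring R] {I : Ideal R}
    {x : R} (J : Ideal R) (hx : x ∈ I) : ∃ k : ℕ, ∀ f ∈ J ^ k, f * x ∈ I :=
  ⟨0, fun f _ => I.mul_mem_left f hx⟩

theorem Ideal.mul_add_mul_add_mul_mem_span_triple {R : Type*} [CommSemiring R] (a b c p q r : R) :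
    p * a + q * b + r * c ∈ Ideal.span {a, b, c} := by
  refine add_mem (add_mem ?_ ?_) ?_ <;> exact Ideal.mul_mem_left _ _ (Ideal.subset_span (by simp))

theorem Ideal.notMem_span_pair_of_map_eq_zero {R S F : Type*} [CommSemiring R] [Semiring S]
    [FunLike F R S] [RingHomClass F R S] (φ : F) {a c x : R} (ha : φ a = 0) (hc : φ c = 0)
    (hx : φ x ≠ 0) : x ∉ Ideal.span {a, c} := by
  intro hmem
  obtain ⟨p, q, rfl⟩ := Ideal.mem_span_pair.1 hmem
  simp [ha, hc] at hx

theorem DualNumber.inl_eps_mul_eps_ne_zero {R : Type*} [CommSemiring R] [Nontrivial R] :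
    (inl DualNumber.eps : DualNumber (DualNumber R)) * DualNumber.eps ≠ 0 := fun h => by
  simpa using congrArg (fun z => z.snd.snd) h

theorem syzygy_exA_exB_exC : exA * exa + exB * exb + exC * exc = 0 := by
  simp only [exA, exB, exC, exa, exb, exc]
  ring

theorem exA_mem_span : exA ∈ Ideal.span {exa, exb, exc} := by
  convert Ideal.mul_add_mul_add_mul_mem_span_triple exa exb exc
    (-(X 0 * X 2) - 2 * X 1 ^ 2) (X 0 * X 1) (X 2 ^ 2) using 1
  simp only [exA, exa, exb, exc]
  ring

theorem exB_mem_span : exB ∈ Ideal.span {exa, exb, exc} := by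
  convert Ideal.mul_add_mul_add_mul_mem_span_triple exa exb exc
    (-(2 * X 0 * X 1)) (X 0 ^ 2 - X 2 ^ 2) (2 * X 1 * X 2) using 1
  simp only [exB, exa, exb, exc]
  ring

theorem exC_mem_span : exC ∈ Ideal.span {exa, exb, exc} := by
  convert Ideal.mul_add_mul_add_mul_mem_span_triple exa exb exc
    (-(2 * X 0 ^ 2)) (-(X 1 * X 2)) (2 * X 1 ^ 2 + 2 * X 0 * X 2) using 1
  simp only [exC, exa, exb, exc]
  ring

noncomputable def squareZeroPoint : Fin 3 → DualNumber (DualNumber ℂ) :=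
  ![inl DualNumber.eps, DualNumber.eps, 1]

theorem exB_notMem_span_exa_exc : exB ∉ Ideal.span {exa, exc} := by
  refine Ideal.notMem_span_pair_of_map_eq_zero (aeval squareZeroPoint) ?_ ?_ ?_
  · simp [exa, squareZeroPoint, sq, ← inl_mul]
  · simp [exc, squareZeroPoint, pow_succ, ← inl_mul]
  · simpa [exB, squareZeroPoint, pow_succ, ← inl_mul] using DualNumber.inl_eps_mul_eps_ne_zero

/-- For `a = s²u + st²`, `b = stu + 2t³`, `c = t²u + s³` and
`A = t²u³ − 2s²t²u`, `B = −stu³ + s³tu`, `C = st²u²`: `(A,B,C)` is a syzygy on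
`(a,b,c)` which vanishes at the basepoints (each of `A`, `B`, `C` lies in the
saturation of `I = ⟨a,b,c⟩` with respect to `⟨s,t,u⟩`) but is not a Koszul
syzygy. -/
theorem example_nonKoszul_syzygy_vanishing_at_basepoints :
    exA * exa + exB * exb + exC * exc = 0 ∧
    (∃ k : ℕ, ∀ f ∈ (Ideal.span {X 0, X 1, X 2} : Ideal (MvPolynomial (Fin 3) ℂ)) ^ k,
      f * exA ∈ (Ideal.span {exa, exb, exc} : Ideal (MvPolynomial (Fin 3) ℂ))) ∧
    (∃ k : ℕ, ∀ f ∈ (Ideal.span {X 0, X 1, X 2} : Ideal (MvPolynomial (Fin 3) ℂ)) ^ k,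
      f * exB ∈ (Ideal.span {exa, exb, exc} : Ideal (MvPolynomial (Fin 3) ℂ))) ∧
    (∃ k : ℕ, ∀ f ∈ (Ideal.span {X 0, X 1, X 2} : Ideal (MvPolynomial (Fin 3) ℂ)) ^ k,
      f * exC ∈ (Ideal.span {exa, exb, exc} : Ideal (MvPolynomial (Fin 3) ℂ))) ∧
    ¬ ∃ h₁ h₂ h₃ : MvPolynomial (Fin 3) ℂ,
      exA = h₁ * exc + h₂ * exb ∧ exB = -h₂ * exa + h₃ * exc ∧
      exC = -h₁ * exa - h₃ * exb := by
  refine ⟨syzygy_exA_exB_exC, Ideal.exists_forall_pow_mul_mem_of_mem _ exA_mem_span,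
    Ideal.exists_forall_pow_mul_mem_of_mem _ exB_mem_span,
    Ideal.exists_forall_pow_mul_mem_of_mem _ exC_mem_span, ?_⟩
  rintro ⟨h₁, h₂, h₃, -, hB, -⟩
  exact exB_notMem_span_exa_exc (Ideal.mem_span_pair.2 ⟨-h₂, h₃, hB.symm⟩)
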